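/- arXiv:1811.03666 — 2 statements merged into one kernel-verified Lean document; each statement's English description precedes it below -/
import Mathlib

section
/- Let Q be an invertible M×M real matrix such that ReLU(Q h) = Q ReLU(h) for every h ∈ ℝ^M. Then Q is a permuted positive diagonal matrix: there exist a permutation σ of {1,…,M} and positive reals d_1,…,d_M such that Q_{i,j} = d_i if j = σ(i) and Q_{i,j} = 0 otherwise (uniqueness direction of ION for a ReLU layer). -/
open Matrix

/-- Componentwise rectifier on `ℝ^M`. -/
def relu {M : ℕ} (v : Fin M → ℝ) : Fin M → ℝ := fun i => max (v i) 0

/-!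
Testing the commutation on a basis vector `e_j` gives `max (Q i j) 0 = Q i j`, so `Q ≥ 0`;
testing it on `e_j - e_k` gives `max (Q i j - Q i k) 0 = Q i j`, so no row of `Q` has two
nonzero entries. An invertible matrix with at most one nonzero entry per row has exactly one
per row and per column, at positions given by a permutation.
-/

namespace Matrix

variable {n R : Type*} [Fintype n] [DecidableEq n] [CommRing R]

theorem exists_perm_ne_zero_iff_of_det_ne_zero {Q : Matrix n n R} (hdet : Q.det ≠ 0)
    (hrow : ∀ i j k, j ≠ k → Q i j = 0 ∨ Q i k = 0) :
    ∃ σ : Equiv.Perm n, ∀ i j, Q i j ≠ 0 ↔ j = σ i := by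
  have hrow_ne : ∀ i, ∃ j, Q i j ≠ 0 := fun i => by
    by_contra! h
    exact hdet (det_eq_zero_of_row_eq_zero i h)
  have hcol_ne : ∀ j, ∃ i, Q i j ≠ 0 := fun j => by
    by_contra! h
    exact hdet (det_eq_zero_of_column_eq_zero j h)
  choose f hf using hrow_ne
  have hsupp : ∀ i j, Q i j ≠ 0 ↔ j = f i := fun i j => by
    refine ⟨fun hj => ?_, fun hj => hj ▸ hf i⟩
    by_contra hne
    exact (hrow i j (f i) hne).elim hj (hf i)
  have hsurj : Function.Surjective f := fun j => by
    obtain ⟨i, hi⟩ := hcol_ne j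
    exact ⟨i, ((hsupp i j).1 hi).symm⟩
  exact ⟨Equiv.ofBijective f (Finite.surjective_iff_bijective.mp hsurj), hsupp⟩

end Matrix

section ReluCommute

variable {M : ℕ}

theorem relu_single_one (j : Fin M) : relu (Pi.single j (1 : ℝ)) = Pi.single j 1 := by
  funext l
  by_cases hl : l = j
  · subst hl
    simp [relu]
  · simp [relu, Pi.single_eq_of_ne hl]

theorem relu_single_one_sub_single_one {j k : Fin M} (hjk : j ≠ k) :
    relu (Pi.single j (1 : ℝ) - Pi.single k 1) = Pi.single j 1 := by
  funext l
  by_cases hlj : l = j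
  · subst hlj
    simp [relu, Pi.single_eq_of_ne hjk]
  · by_cases hlk : l = k
    · subst hlk
      simp [relu, Pi.single_eq_of_ne hlj]
    · simp [relu, Pi.single_eq_of_ne hlj, Pi.single_eq_of_ne hlk]

variable {Q : Matrix (Fin M) (Fin M) ℝ} (hcomm : ∀ h : Fin M → ℝ, relu (Q *ᵥ h) = Q *ᵥ relu h)
include hcomm

theorem nonneg_of_relu_mulVec_comm (i j : Fin M) : 0 ≤ Q i j := by
  have h := congrFun (hcomm (Pi.single j 1)) i
  rw [relu_single_one] at h
  simpa [relu, mulVec_single_one] using h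

theorem eq_zero_or_eq_zero_of_relu_mulVec_comm (i : Fin M) {j k : Fin M} (hjk : j ≠ k) :
    Q i j = 0 ∨ Q i k = 0 := by
  have h := congrFun (hcomm (Pi.single j 1 - Pi.single k 1)) i
  rw [relu_single_one_sub_single_one hjk] at h
  simp only [relu, mulVec_sub, Pi.sub_apply, mulVec_single_one, col_apply] at h
  have hj := nonneg_of_relu_mulVec_comm hcomm i j
  have hk := nonneg_of_relu_mulVec_comm hcomm i k
  rcases max_cases (Q i j - Q i k) 0 with ⟨he, _⟩ | ⟨he, _⟩ <;> rw [he] at h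
  · exact Or.inr (by linarith)
  · exact Or.inl (by linarith)

end ReluCommute

/-- **Uniqueness direction of ION for a ReLU layer.** If `Q` is an invertible real `M × M`
matrix such that `ReLU(Q h) = Q ReLU(h)` for every `h ∈ ℝ^M`, then `Q` is a permuted
positive diagonal matrix: there are a permutation `σ` and positive reals `d i` with
`Q i j = d i` if `j = σ i` and `Q i j = 0` otherwise. -/
theorem ion_relu_layer_unique {M : ℕ} (Q : Matrix (Fin M) (Fin M) ℝ)
    (hQ : IsUnit Q.det)
    (hcomm : ∀ h : Fin M → ℝ, relu (Q.mulVec h) = Q.mulVec (relu h)) :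
    ∃ (σ : Equiv.Perm (Fin M)) (d : Fin M → ℝ),
      (∀ i, 0 < d i) ∧ ∀ i j, Q i j = if j = σ i then d i else 0 := by
  obtain ⟨σ, hσ⟩ := exists_perm_ne_zero_iff_of_det_ne_zero hQ.ne_zero
    fun i _ _ => eq_zero_or_eq_zero_of_relu_mulVec_comm hcomm i
  refine ⟨σ, fun i => Q i (σ i), fun i => ?_, fun i j => ?_⟩
  · exact (nonneg_of_relu_mulVec_comm hcomm i (σ i)).lt_of_ne ((hσ i (σ i)).2 rfl).symm
  · split_ifs with hj
    · rw [hj]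
    · exact not_ne_iff.mp (mt (hσ i j).1 hj)
end

section
/- Let q ∈ ℝ^M be a nonzero vector such that max(⟨q, h⟩, 0) = ⟨q, ReLU(h)⟩ for every h ∈ ℝ^M, where ⟨·,·⟩ is the standard inner product. Then q has exactly one nonzero coordinate, and that coordinate is positive. -/
open Matrix

section

variable {ι R : Type*} [Fintype ι] [CommRing R] [LinearOrder R] [IsStrictOrderedRing R]

def CommutesWithReLU (q : ι → R) : Prop :=
  ∀ h : ι → R, (q ⬝ᵥ h)⁺ = q ⬝ᵥ h⁺

variable [DecidableEq ι] {q : ι → R}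

theorem CommutesWithReLU.nonneg (hq : CommutesWithReLU q) (i : ι) : 0 ≤ q i := by
  have hsingle : (Pi.single i 1 : ι → R)⁺ = Pi.single i 1 :=
    posPart_eq_self.mpr (Pi.single_nonneg.mpr zero_le_one)
  have key := hq (Pi.single i 1)
  rw [hsingle, dotProduct_single, mul_one] at key
  exact key ▸ posPart_nonneg _

-- On `q j • eᵢ - q i • eⱼ` the left side vanishes, while the right side is `q i * q j`.
theorem CommutesWithReLU.eq_zero_of_ne (hq : CommutesWithReLU q) {i j : ι} (hji : j ≠ i)
    (hi : 0 < q i) : q j = 0 := by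
  by_contra hj
  have hj : 0 < q j := (hq.nonneg j).lt_of_ne' hj
  set h : ι → R := Pi.single i (q j) - Pi.single j (q i)
  have hpos : h⁺ = Pi.single i (q j) := by
    ext t
    rcases eq_or_ne t i with rfl | hti
    · simp [h, hji, hj.le]
    · rcases eq_or_ne t j with rfl | htj
      · simp [h, hti, hi.le]
      · simp [h, hti, htj]
  have hlhs : q ⬝ᵥ h = 0 := by
    rw [dotProduct_sub, dotProduct_single, dotProduct_single, mul_comm, sub_self]
  have hrhs : q ⬝ᵥ h⁺ = q i * q j := by rw [hpos, dotProduct_single]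
  have key := hq h
  rw [hlhs, hrhs, posPart_zero] at key
  exact (mul_pos hi hj).ne key

end

/-- If `q ∈ ℝ^M` is nonzero and `max(⟨q, h⟩, 0) = ⟨q, ReLU(h)⟩` for every `h ∈ ℝ^M`,
then `q` has exactly one nonzero coordinate, and that coordinate is positive. -/
theorem relu_row_single_positive {M : ℕ} (q : Fin M → ℝ) (hq : q ≠ 0)
    (hrelu : ∀ h : Fin M → ℝ,
      max (∑ i, q i * h i) 0 = ∑ i, q i * max (h i) 0) :
    ∃ i : Fin M, 0 < q i ∧ ∀ j : Fin M, j ≠ i → q j = 0 := by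
  -- `max a 0` is `a⁺` and `∑ i, q i * h i` is `q ⬝ᵥ h` by definition.
  have hcomm : CommutesWithReLU q := hrelu
  obtain ⟨i, hi⟩ := Function.ne_iff.mp hq
  have hpos : 0 < q i := (hcomm.nonneg i).lt_of_ne' hi
  exact ⟨i, hpos, fun j hji => hcomm.eq_zero_of_ne hji hpos⟩
end
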